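/- For all integers n ≥ k ≥ 0, the (q,r)-Whitney numbers of the second kind satisfy the horizontal recurrence relation W_{m,r}[n,k]_q = Σ_{j=0}^{n−k} (−1)^j q^{−r−m(k+j)} · (∏_{h=k+1}^{k+j} q^{−(r+mh−m)} [mh+r]_q) · W_{m,r}[n+1,k+j+1]_q, where the product over an empty index range equals 1. -/

import Mathlib

open Finset

/-- The `q`-integer `[s]_q = (q^s - 1)/(q - 1)` for an integer `s`. -/
noncomputable def qint (q : ℝ) (s : ℤ) : ℝ := (q ^ s - 1) / (q - 1)

/-- The `(q,r)`-Whitney numbers of the second kind `W_{m,r}[n,k]_q`, with `r : ℤ` so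
that both `W_{m,r}` and `W_{m,-r}` are covered: `W[0,0] = 1`, `W[n,k] = 0` for `k > n`,
and `W[n,k] = q^(m(k-1)+r) W[n-1,k-1] + [mk+r]_q W[n-1,k]`. -/
noncomputable def qWhitney2 (q : ℝ) (m : ℕ) (r : ℤ) : ℕ → ℕ → ℝ
  | 0, 0 => 1
  | 0, _ + 1 => 0
  | n + 1, 0 => qint q r * qWhitney2 q m r n 0
  | n + 1, k + 1 =>
      q ^ (m * k + r) * qWhitney2 q m r n k
        + qint q (m * (k + 1) + r) * qWhitney2 q m r n (k + 1)

/-! Solving the defining recurrence for `W[n,k]` gives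
`W[n,k] = q^(-(r+mk)) W[n+1,k+1] - q^(-(r+mk)) [m(k+1)+r]_q W[n,k+1]`, a first-order
recurrence in `k` for fixed `n`. Unrolling it from `k` up to `n`, where the tail `W[n,n+1]`
vanishes, yields the horizontal recurrence. -/

theorem eq_sum_range_add_of_eq_add_mul {R : Type*} [CommSemiring R] {f g c : ℕ → R}
    (h : ∀ k, f k = g k + c k * f (k + 1)) (k d : ℕ) :
    f k = ∑ j ∈ range (d + 1), (∏ i ∈ range j, c (k + i)) * g (k + j)
      + (∏ i ∈ range (d + 1), c (k + i)) * f (k + d + 1) := by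
  induction d with
  | zero => simpa using h k
  | succ d ih =>
    rw [ih, h (k + d + 1), sum_range_succ _ (d + 1), prod_range_succ _ (d + 1), ← add_assoc k d 1]
    ring

theorem qWhitney2_eq_zero_of_lt (q : ℝ) (m : ℕ) (r : ℤ) {n k : ℕ} (h : n < k) :
    qWhitney2 q m r n k = 0 := by
  induction n generalizing k with
  | zero => obtain ⟨k, rfl⟩ := Nat.exists_eq_succ_of_ne_zero (by omega : k ≠ 0); rfl
  | succ n ih =>
    obtain ⟨k, rfl⟩ := Nat.exists_eq_succ_of_ne_zero (by omega : k ≠ 0)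
    rw [qWhitney2, ih (by omega), ih (by omega), mul_zero, mul_zero, add_zero]

theorem qWhitney2_eq_zpow_neg_mul_add {q : ℝ} (hq : q ≠ 0) (m : ℕ) (r : ℤ) (n k : ℕ) :
    qWhitney2 q m r n k = q ^ (-(r + m * k)) * qWhitney2 q m r (n + 1) (k + 1)
      + -(q ^ (-(r + m * k)) * qint q (m * (k + 1) + r)) * qWhitney2 q m r n (k + 1) := by
  have hpow : q ^ (-(r + m * k)) = (q ^ (m * k + r))⁻¹ := by rw [← zpow_neg, add_comm]
  have hne : q ^ (m * k + r) ≠ 0 := zpow_ne_zero _ hq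
  rw [qWhitney2, hpow]
  field_simp
  ring

theorem prod_range_neg_zpow_mul_qint (q : ℝ) (m : ℕ) (r : ℤ) (k j : ℕ) :
    ∏ i ∈ range j, -(q ^ (-(r + m * ((k + i : ℕ) : ℤ))) * qint q (m * ((k + i : ℕ) + 1) + r))
      = (-1) ^ j * ∏ h ∈ Icc (k + 1) (k + j), q ^ (-(r + m * h - m)) * qint q (m * h + r) := by
  rw [← Ico_add_one_right_eq_Icc, prod_Ico_eq_prod_range, show k + j + 1 - (k + 1) = j by omega,
    prod_neg, card_range]
  congr 1
  refine prod_congr rfl fun i _ => ?_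
  push_cast
  ring_nf

theorem qWhitney2_horizontal_recurrence_general (q : ℝ) (hq : 0 < q) (m r : ℕ)
    (n k : ℕ) (hkn : k ≤ n) :
    qWhitney2 q m (r : ℤ) n k =
      ∑ j ∈ Finset.range (n - k + 1),
        (-1 : ℝ) ^ j * q ^ (-((r : ℤ) + m * (k + j))) *
          (∏ h ∈ Finset.Icc (k + 1) (k + j),
            q ^ (-((r : ℤ) + m * h - m)) * qint q ((m : ℤ) * h + r)) *
          qWhitney2 q m (r : ℤ) (n + 1) (k + j + 1) := by
  obtain ⟨d, rfl⟩ := Nat.exists_eq_add_of_le hkn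
  rw [eq_sum_range_add_of_eq_add_mul (qWhitney2_eq_zpow_neg_mul_add hq.ne' m r (k + d)) k d,
    qWhitney2_eq_zero_of_lt q m r (by omega), mul_zero, add_zero, Nat.add_sub_cancel_left]
  refine sum_congr rfl fun j _ => ?_
  rw [prod_range_neg_zpow_mul_qint]
  push_cast
  ring

theorem qWhitney2_horizontal_recurrence (q : ℝ) (hq : 0 < q) (hq1 : q ≠ 1) (m r : ℕ) (hm : 0 < m) (hr : 0 < r)
    (n k : ℕ) (hkn : k ≤ n) :
    qWhitney2 q m (r : ℤ) n k =
      ∑ j ∈ Finset.range (n - k + 1),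
        (-1 : ℝ) ^ j * q ^ (-((r : ℤ) + m * (k + j))) *
          (∏ h ∈ Finset.Icc (k + 1) (k + j),
            q ^ (-((r : ℤ) + m * h - m)) * qint q ((m : ℤ) * h + r)) *
          qWhitney2 q m (r : ℤ) (n + 1) (k + j + 1) :=
  qWhitney2_horizontal_recurrence_general q hq m r n k hkn
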